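/- The first-passage probabilities Fᵢ := F([i], o) of the embedded chain satisfy the system of equations Fᵢ·((k⁻(i) + K) − Σᵣ k⁺(r)·Fᵣ) = k⁻(i) for every i ∈ Fin d; equivalently k⁻(i)/((k⁻(i) + K) − Σᵣ k⁺(r)·Fᵣ) = Fᵢ. -/

import Mathlib

/-!
First-step analysis from `[i]`: the chain either steps down to `o` at once, or steps up to
`[i, j]`. From `[i, j]` it can only reach `o` through `[i]`, so the first-passage law from
`[i, j]` to `o` is the convolution of the law from `[i, j]` to `[i]` with the law from `[i]` to
`o`; the tree looks the same below every vertex, so the former is the law from `[j]` to `o`.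
Summing the convolution (a Cauchy product, legitimate because the passage probabilities are
nonnegative with total mass at most one) gives `F([i, j], o) = F_j F_i`, whence
`F_i (k⁻(i) + K) = k⁻(i) + Σ_j k⁺(j) F_j F_i`.
-/

open Finset Function

section FirstPassage

variable {S : Type*} [DecidableEq S] {p : S → S → ℝ} {f : ℕ → S → S → ℝ}

structure IsFirstPassage (p : S → S → ℝ) (f : ℕ → S → S → ℝ) : Prop where
  one : ∀ x y, f 1 x y = p x y
  succ : ∀ n x y, f (n + 2) x y = ∑' z, if z = y then 0 else p x z * f (n + 1) z y

namespace IsFirstPassage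

theorem nonneg (hf : IsFirstPassage p f) (hp : ∀ x y, 0 ≤ p x y) (n : ℕ) (x y : S) :
    0 ≤ f (n + 1) x y := by
  induction n generalizing x with
  | zero => simpa only [hf.one] using hp x y
  | succ n ih =>
    rw [hf.succ]
    exact tsum_nonneg fun z => by
      split_ifs
      exacts [le_rfl, mul_nonneg (hp x z) (ih z)]

theorem succ_eq_sum (hf : IsFirstPassage p f) {x : S} {s : Finset S} (hs : support (p x) ⊆ s)
    (n : ℕ) (y : S) :
    f (n + 2) x y = ∑ z ∈ s, if z = y then 0 else p x z * f (n + 1) z y := by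
  refine (hf.succ n x y).trans (tsum_eq_sum' (subset_trans ?_ hs))
  rw [support_subset_iff']
  intro z hz
  rw [notMem_support.mp hz, zero_mul, ite_self]

theorem sum_range_le_one (hf : IsFirstPassage p f) (hp : ∀ x y, 0 ≤ p x y)
    (hfin : ∀ x, (support (p x)).Finite) (hrow : ∀ x, ∑' z, p x z ≤ 1) (y : S) (N : ℕ) (x : S) :
    ∑ m ∈ range N, f (m + 1) x y ≤ 1 := by
  induction N generalizing x with
  | zero => simp
  | succ N ih =>
    set s := insert y (hfin x).toFinset
    have hs : support (p x) ⊆ s := by simp [s, Set.subset_insert]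
    calc ∑ m ∈ range (N + 1), f (m + 1) x y
        = p x y + ∑ z ∈ s, if z = y then 0 else p x z * ∑ m ∈ range N, f (m + 1) z y := by
          simp_rw [sum_range_succ', hf.succ_eq_sum hs, hf.one, add_comm (p x y)]
          rw [sum_comm]
          congr 1
          refine sum_congr rfl fun z _ => ?_
          split_ifs
          exacts [sum_const_zero, (mul_sum _ _ _).symm]
      _ ≤ p x y + ∑ z ∈ s, if z = y then 0 else p x z := by
          gcongr with z
          split_ifs
          exacts [le_rfl, mul_le_of_le_one_right (hp x z) (ih z)]
      _ = ∑ z ∈ s, p x z := by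
          rw [sum_ite, sum_const_zero, zero_add, filter_ne',
            add_sum_erase _ _ (mem_insert_self y _)]
      _ = ∑' z, p x z := (tsum_eq_sum' hs).symm
      _ ≤ 1 := hrow x

theorem summable (hf : IsFirstPassage p f) (hp : ∀ x y, 0 ≤ p x y)
    (hfin : ∀ x, (support (p x)).Finite) (hrow : ∀ x, ∑' z, p x z ≤ 1) (x y : S) :
    Summable fun n => f (n + 1) x y :=
  summable_of_sum_range_le (fun n => hf.nonneg hp n x y)
    fun N => hf.sum_range_le_one hp hfin hrow y N x

theorem map_eq_of_injective (hf : IsFirstPassage p f) {φ : S → S} (hφ : Injective φ) {b : S}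
    (hrange : ∀ u ≠ b, support (p (φ u)) ⊆ Set.range φ)
    (hpφ : ∀ u ≠ b, ∀ v, p (φ u) (φ v) = p u v) (n : ℕ) {u : S} (hu : u ≠ b) :
    f (n + 1) (φ u) (φ b) = f (n + 1) u b := by
  induction n generalizing u with
  | zero => rw [hf.one, hf.one, hpφ u hu]
  | succ n ih =>
    rw [hf.succ, hf.succ, ← hφ.tsum_eq]
    · refine tsum_congr fun v => ?_
      simp only [hφ.eq_iff]
      split_ifs with hv
      · rfl
      · rw [hpφ u hu, ih hv]
    · refine subset_trans (fun z hz => ?_) (hrange u hu)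
      contrapose hz
      rw [notMem_support] at hz ⊢
      rw [hz, zero_mul, ite_self]

theorem eq_sum_range_of_cut (hf : IsFirstPassage p f) (hfin : ∀ x, (support (p x)).Finite)
    {A : Set S} {x y : S} (hyx : y ≠ x) (hyA : y ∉ A) (hA : ∀ z ∈ A, support (p z) ⊆ insert x A)
    (n : ℕ) {z : S} (hz : z ∈ A) :
    f (n + 1) z y = ∑ m ∈ range n, f (m + 1) z x * f (n - m) x y := by
  induction n generalizing z with
  | zero =>
    rw [hf.one, sum_range_zero, ← notMem_support]
    exact fun hy => (Set.mem_insert_iff.mp (hA z hz hy)).elim hyx hyA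
  | succ n ih =>
    set s := insert x (hfin z).toFinset
    have hs : support (p z) ⊆ s := by simp [s, Set.subset_insert]
    have hstep : ∀ w ∈ s, (if w = y then 0 else p z w * f (n + 1) w y) =
        (if w = x then p z x * f (n + 1) x y else 0) +
          if w = x then 0 else p z w * ∑ m ∈ range n, f (m + 1) w x * f (n - m) x y := by
      intro w _
      by_cases hwx : w = x
      · simp [hwx, hyx.symm]
      by_cases hpw : p z w = 0
      · simp [hpw, hwx]
      have hwA : w ∈ A := (Set.mem_insert_iff.mp (hA z hz hpw)).resolve_left hwx
      rw [if_neg (ne_of_mem_of_not_mem hwA hyA), if_neg hwx, if_neg hwx, ih hwA, zero_add]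
    rw [hf.succ_eq_sum hs, sum_congr rfl hstep, sum_add_distrib, sum_ite_eq', if_pos
      (mem_insert_self x _), sum_range_succ', ← hf.one]
    simp_rw [hf.succ_eq_sum hs, sum_mul, mul_sum]
    rw [add_comm, sum_comm]
    congr 1
    refine sum_congr rfl fun w _ => ?_
    split_ifs
    · simp
    · simp [mul_assoc]

end IsFirstPassage

end FirstPassage

def properExtensions {α : Type*} (x : List α) : Set (List α) := {z | ∃ w ≠ [], z = x ++ w}

section Polymer

variable {d : ℕ} {kp km : Fin d → ℝ} {K : ℝ} {p : List (Fin d) → List (Fin d) → ℝ}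
  {f : ℕ → List (Fin d) → List (Fin d) → ℝ}

structure IsPolymerKernel (kp km : Fin d → ℝ) (K : ℝ) (p : List (Fin d) → List (Fin d) → ℝ) :
    Prop where
  root : ∀ i, p [] [i] = kp i / K
  up : ∀ x i j, p (x ++ [i]) (x ++ [i] ++ [j]) = kp j / (km i + K)
  down : ∀ x i, p (x ++ [i]) x = km i / (km i + K)
  zero : ∀ x y, (¬ ∃ i, y = x ++ [i]) → (¬ ∃ i, x = y ++ [i]) → p x y = 0

namespace IsPolymerKernel

theorem adjacent_of_ne_zero (hp : IsPolymerKernel kp km K p) {x y : List (Fin d)}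
    (h : p x y ≠ 0) : (∃ j, y = x ++ [j]) ∨ ∃ j, x = y ++ [j] := by
  by_contra! hxy
  exact h (hp.zero x y (not_exists.mpr hxy.1) (not_exists.mpr hxy.2))

theorem support_subset (hp : IsPolymerKernel kp km K p) (x : List (Fin d)) :
    support (p x) ⊆ insert x.dropLast (Set.range fun j => x ++ [j]) := by
  intro y hy
  rcases hp.adjacent_of_ne_zero hy with ⟨j, rfl⟩ | ⟨j, rfl⟩
  · exact Set.mem_insert_of_mem _ ⟨j, rfl⟩
  · simp

theorem finite_support (hp : IsPolymerKernel kp km K p) (x : List (Fin d)) :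
    (support (p x)).Finite :=
  ((Set.finite_range _).insert _).subset (hp.support_subset x)

theorem nonneg (hp : IsPolymerKernel kp km K p) (hkp : ∀ i, 0 ≤ kp i) (hkm : ∀ i, 0 ≤ km i)
    (hK0 : 0 ≤ K) (x y : List (Fin d)) : 0 ≤ p x y := by
  by_cases hxy : p x y = 0
  · exact hxy.ge
  rcases hp.adjacent_of_ne_zero hxy with ⟨j, rfl⟩ | ⟨j, rfl⟩
  · rcases x.eq_nil_or_concat' with rfl | ⟨x, i, rfl⟩
    · rw [List.nil_append, hp.root]
      exact div_nonneg (hkp j) hK0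
    · rw [hp.up]
      exact div_nonneg (hkp j) (add_nonneg (hkm i) hK0)
  · rw [hp.down]
    exact div_nonneg (hkm j) (add_nonneg (hkm j) hK0)

theorem append_left (hp : IsPolymerKernel kp km K p) (x : List (Fin d)) {u : List (Fin d)}
    (hu : u ≠ []) (v : List (Fin d)) : p (x ++ u) (x ++ v) = p u v := by
  obtain ⟨u, a, rfl⟩ := u.eq_nil_or_concat'.resolve_left hu
  by_cases hup : ∃ j, v = u ++ [a] ++ [j]
  · obtain ⟨j, rfl⟩ := hup
    simp only [← List.append_assoc, hp.up]
  by_cases hdown : ∃ j, u ++ [a] = v ++ [j]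
  · obtain ⟨j, hj⟩ := hdown
    obtain ⟨rfl, -⟩ := List.append_inj' hj rfl
    rw [← List.append_assoc, hp.down, hp.down]
  rw [hp.zero _ _ hup hdown, hp.zero]
  · simpa only [List.append_assoc, List.append_cancel_left_eq] using hup
  · simpa only [List.append_assoc, List.append_cancel_left_eq] using hdown

theorem tsum_mul_concat (hp : IsPolymerKernel kp km K p) (x : List (Fin d)) (a : Fin d)
    (g : List (Fin d) → ℝ) :
    ∑' z, p (x ++ [a]) z * g z =
      km a / (km a + K) * g x + ∑ j, kp j / (km a + K) * g (x ++ [a] ++ [j]) := by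
  have hx : x ∉ univ.image fun j => x ++ [a] ++ [j] := by simp
  rw [tsum_eq_sum' (s := insert x (univ.image fun j => x ++ [a] ++ [j])), sum_insert hx,
    sum_image fun j _ j' _ h => by simpa using h]
  · simp only [hp.down, hp.up]
  · refine subset_trans (support_mul_subset_left _ _) ((hp.support_subset _).trans ?_)
    simp

theorem tsum_le_one (hp : IsPolymerKernel kp km K p) (hkp : ∀ i, 0 ≤ kp i) (hkm : ∀ i, 0 < km i)
    (hK : K = ∑ i, kp i) (x : List (Fin d)) : ∑' z, p x z ≤ 1 := by
  have hK0 : 0 ≤ K := hK ▸ sum_nonneg fun i _ => hkp i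
  rcases x.eq_nil_or_concat' with rfl | ⟨x, a, rfl⟩
  · rw [← List.singleton_injective.tsum_eq, tsum_fintype]
    · simp only [hp.root, ← sum_div, ← hK]
      exact div_self_le_one K
    · intro y hy
      rcases hp.adjacent_of_ne_zero hy with ⟨j, rfl⟩ | ⟨j, h⟩
      · exact ⟨j, rfl⟩
      · simp at h
  · have h := hp.tsum_mul_concat x a 1
    simp only [Pi.one_apply, mul_one, ← sum_div, ← hK] at h
    rw [h, ← add_div, div_self (add_pos_of_pos_of_nonneg (hkm a) hK0).ne']

theorem support_subset_properExtensions (hp : IsPolymerKernel kp km K p) {x z : List (Fin d)}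
    (hz : z ∈ properExtensions x) : support (p z) ⊆ insert x (properExtensions x) := by
  obtain ⟨w, hw, rfl⟩ := hz
  intro y hy
  rcases hp.adjacent_of_ne_zero hy with ⟨j, rfl⟩ | ⟨j, hj⟩
  · exact Or.inr ⟨w ++ [j], by simp, by simp⟩
  · have hy : y = x ++ w.dropLast := by
      rw [← List.dropLast_append_of_ne_nil hw, hj, List.dropLast_concat]
    by_cases hw' : w.dropLast = []
    · exact Or.inl (by rw [hy, hw', List.append_nil])
    · exact Or.inr ⟨_, hw', hy⟩

theorem firstPassage_pair (hp : IsPolymerKernel kp km K p) (hf : IsFirstPassage p f)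
    (i j : Fin d) (n : ℕ) :
    f (n + 1) [i, j] [] = ∑ m ∈ range n, f (m + 1) [j] [] * f (n - m) [i] [] := by
  have hrange : ∀ u ≠ [], support (p ([i] ++ u)) ⊆ Set.range ([i] ++ ·) := by
    intro u hu
    refine (hp.support_subset_properExtensions ⟨u, hu, rfl⟩).trans ?_
    rintro _ (rfl | ⟨w, -, rfl⟩)
    exacts [⟨[], rfl⟩, ⟨w, rfl⟩]
  refine (hf.eq_sum_range_of_cut hp.finite_support (A := properExtensions [i]) (by simp)
    (by simp [properExtensions]) (fun z hz => hp.support_subset_properExtensions hz) n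
    ⟨[j], by simp, rfl⟩).trans (sum_congr rfl fun m _ => congrArg (· * _) ?_)
  exact hf.map_eq_of_injective (List.append_right_injective [i]) hrange
    (fun u hu => hp.append_left [i] hu) m (List.cons_ne_nil j [])

theorem summable_firstPassage (hp : IsPolymerKernel kp km K p) (hf : IsFirstPassage p f)
    (hkp : ∀ i, 0 ≤ kp i) (hkm : ∀ i, 0 < km i) (hK : K = ∑ i, kp i) (x y : List (Fin d)) :
    Summable fun n => f (n + 1) x y :=
  hf.summable (hp.nonneg hkp (fun i => (hkm i).le) (hK ▸ sum_nonneg fun i _ => hkp i))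
    hp.finite_support (hp.tsum_le_one hkp hkm hK) x y

theorem tsum_firstPassage_pair (hp : IsPolymerKernel kp km K p) (hf : IsFirstPassage p f)
    (hkp : ∀ i, 0 ≤ kp i) (hkm : ∀ i, 0 < km i) (hK : K = ∑ i, kp i) (i j : Fin d) :
    ∑' n, f (n + 1) [i, j] [] = (∑' n, f (n + 1) [j] []) * ∑' n, f (n + 1) [i] [] := by
  have hs := hp.summable_firstPassage hf hkp hkm hK
  have hnn : ∀ x y, 0 ≤ fun n => f (n + 1) x y := fun x y n =>
    hf.nonneg (hp.nonneg hkp (fun i => (hkm i).le) (hK ▸ sum_nonneg fun i _ => hkp i)) n x y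
  rw [(hs _ _).tsum_eq_zero_add, (hs _ _).tsum_mul_tsum_eq_tsum_sum_range (hs _ _)
    ((hs _ _).mul_of_nonneg (hs _ _) (hnn _ _) (hnn _ _))]
  simp only [hp.firstPassage_pair hf, sum_range_zero, zero_add]
  refine tsum_congr fun n => sum_congr rfl fun m hm => ?_
  rw [Nat.sub_add_comm (Nat.le_of_lt_succ (mem_range.mp hm))]

theorem tsum_firstPassage_singleton (hp : IsPolymerKernel kp km K p) (hf : IsFirstPassage p f)
    (hkp : ∀ i, 0 ≤ kp i) (hkm : ∀ i, 0 < km i) (hK : K = ∑ i, kp i) (i : Fin d) :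
    ∑' n, f (n + 1) [i] [] = km i / (km i + K) +
      ∑ j, kp j / (km i + K) * ((∑' n, f (n + 1) [j] []) * ∑' n, f (n + 1) [i] []) := by
  have hs := hp.summable_firstPassage hf hkp hkm hK
  have hstep : ∀ n, f (n + 2) [i] [] = ∑ j, kp j / (km i + K) * f (n + 1) [i, j] [] := by
    intro n
    have h := hp.tsum_mul_concat [] i fun z => if z = [] then 0 else f (n + 1) z []
    simp only [List.nil_append, List.cons_append, List.cons_ne_nil, ↓reduceIte, mul_zero,
      zero_add] at h
    rw [hf.succ, ← h]
    exact tsum_congr fun z => by split_ifs <;> simp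
  conv_lhs => rw [(hs _ _).tsum_eq_zero_add, hf.one, show p [i] [] = _ from hp.down [] i]
  simp_rw [hstep]
  rw [Summable.tsum_finsetSum fun j _ => (hs _ _).mul_left _]
  simp_rw [tsum_mul_left, hp.tsum_firstPassage_pair hf hkp hkm hK]

end IsPolymerKernel

end Polymer

theorem stmt14_general (d : ℕ) (kp km : Fin d → ℝ)
    (hkp : ∀ i, 0 < kp i) (hkm : ∀ i, 0 < km i)
    (K : ℝ) (hK : K = ∑ i : Fin d, kp i)
    (p : List (Fin d) → List (Fin d) → ℝ)
    (hp_root : ∀ i : Fin d, p [] [i] = kp i / K)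
    (hp_up : ∀ (x : List (Fin d)) (i j : Fin d),
      p (x ++ [i]) (x ++ [i] ++ [j]) = kp j / (km i + K))
    (hp_down : ∀ (x : List (Fin d)) (i : Fin d), p (x ++ [i]) x = km i / (km i + K))
    (hp_zero : ∀ x y : List (Fin d),
      (¬ ∃ i : Fin d, y = x ++ [i]) → (¬ ∃ i : Fin d, x = y ++ [i]) → p x y = 0)
    (f : ℕ → List (Fin d) → List (Fin d) → ℝ)
    (hf1 : ∀ x y : List (Fin d), f 1 x y = p x y)
    (hfs : ∀ n : ℕ, 1 ≤ n → ∀ x y : List (Fin d),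
      f (n + 1) x y = ∑' z : List (Fin d), if z = y then 0 else p x z * f n z y) :
    ∀ i : Fin d,
      (∑' n : ℕ, f (n + 1) [i] [])
          * ((km i + K) - ∑ r : Fin d, kp r * ∑' n : ℕ, f (n + 1) [r] []) = km i ∧
      km i / ((km i + K) - ∑ r : Fin d, kp r * ∑' n : ℕ, f (n + 1) [r] [])
          = ∑' n : ℕ, f (n + 1) [i] [] := by
  have hp : IsPolymerKernel kp km K p := ⟨hp_root, hp_up, hp_down, hp_zero⟩
  have hf : IsFirstPassage p f := ⟨hf1, fun n => hfs (n + 1) le_add_self⟩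
  intro i
  have hD : km i + K ≠ 0 :=
    (add_pos_of_pos_of_nonneg (hkm i) (hK ▸ sum_nonneg fun r _ => (hkp r).le)).ne'
  have hrenewal := hp.tsum_firstPassage_singleton hf (fun r => (hkp r).le) hkm hK i
  simp_rw [div_mul_eq_mul_div, ← sum_div, ← add_div, eq_div_iff hD] at hrenewal
  have hF : (∑' n, f (n + 1) [i] []) * ((km i + K) - ∑ r, kp r * ∑' n, f (n + 1) [r] []) =
      km i := by
    rw [mul_sub, hrenewal, mul_sum, add_sub_assoc,
      sub_eq_zero_of_eq (sum_congr rfl fun r _ => by ring), add_zero]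
  refine ⟨hF, div_eq_of_eq_mul ?_ hF.symm⟩
  intro h
  rw [h, mul_zero] at hF
  exact (hkm i).ne' hF.symm

/-- The first-passage probabilities `Fᵢ := F([i], o)` of the embedded
chain satisfy the system `Fᵢ · ((k⁻ i + K) − Σ r, k⁺ r · F r) = k⁻ i` for every `i`;
equivalently `k⁻ i / ((k⁻ i + K) − Σ r, k⁺ r · F r) = Fᵢ`.  Here
`F(x,y) = Σ_{n≥1} fⁿ(x,y)` with `f¹ = p` and `fⁿ⁺¹(x,y) = Σ_{z≠y} p(x,z)·fⁿ(z,y)`. -/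
theorem stmt14 (d : ℕ) (hd : 1 ≤ d) (kp km : Fin d → ℝ)
    (hkp : ∀ i, 0 < kp i) (hkm : ∀ i, 0 < km i)
    (K : ℝ) (hK : K = ∑ i : Fin d, kp i)
    (p : List (Fin d) → List (Fin d) → ℝ)
    (hp_root : ∀ i : Fin d, p [] [i] = kp i / K)
    (hp_up : ∀ (x : List (Fin d)) (i j : Fin d),
      p (x ++ [i]) (x ++ [i] ++ [j]) = kp j / (km i + K))
    (hp_down : ∀ (x : List (Fin d)) (i : Fin d), p (x ++ [i]) x = km i / (km i + K))
    (hp_zero : ∀ x y : List (Fin d),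
      (¬ ∃ i : Fin d, y = x ++ [i]) → (¬ ∃ i : Fin d, x = y ++ [i]) → p x y = 0)
    (f : ℕ → List (Fin d) → List (Fin d) → ℝ)
    (hf1 : ∀ x y : List (Fin d), f 1 x y = p x y)
    (hfs : ∀ n : ℕ, 1 ≤ n → ∀ x y : List (Fin d),
      f (n + 1) x y = ∑' z : List (Fin d), if z = y then 0 else p x z * f n z y) :
    ∀ i : Fin d,
      (∑' n : ℕ, f (n + 1) [i] [])
          * ((km i + K) - ∑ r : Fin d, kp r * ∑' n : ℕ, f (n + 1) [r] []) = km i ∧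
      km i / ((km i + K) - ∑ r : Fin d, kp r * ∑' n : ℕ, f (n + 1) [r] [])
          = ∑' n : ℕ, f (n + 1) [i] [] :=
  stmt14_general d kp km hkp hkm K hK p hp_root hp_up hp_down hp_zero f hf1 hfs
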